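/- arXiv:2011.08358 — 2 statements merged into one kernel-verified Lean document; each statement's English description precedes it below -/
import Mathlib

section
/- Fix 1 ≤ α ≤ n and a tuple s = (s_1,…,s_n) of positive reals with s_α ≤ 1, and let s' be the tuple with s'_β = s_β for β ≠ α and s'_α = p·s_α. The ℚ_p-algebra endomorphism of ℚ_p[T_1,…,T_n] determined by T_α ↦ (1+T_α)^p − 1 and T_β ↦ T_β for β ≠ α satisfies ‖φ_α(f)‖_s = ‖f‖_{s'} for all polynomials f, and hence extends uniquely to an isometric, in particular injective, continuous ℚ_p-algebra homomorphism φ_α : Π_{[s',∞]} → Π_{[s,∞]} between the completions of the polynomial ring with respect to the Gauss norms ‖·‖_{s'} and ‖·‖_s. -/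
/-!
Put `ρ_β = p^{-s_β/(p-1)}`. Then `‖·‖_s` weights `T^m` by `∏ ρ_β^{m_β}`, and passing from `s`
to `s'` replaces `ρ_α` by `ρ_α^p`. The condition `s_α ≤ 1` says `|p| ≤ ρ_α^{p-1}`, so on
`|X| = ρ_α` the polynomial `G = (1+X)^p - 1` is dominated by its leading term `X^p`; the same
then holds for all powers `G^k`. This bounds every coefficient of `φ_α(f)` by `‖f‖_{s'}`.
Conversely, let `m₀` maximise `|a_m|·w_{s'}(m)`, with `m₀_α` largest among the maximisers. The
coefficient of `φ_α(f)` at `m₀` with `p·m₀_α` in place of `m₀_α` is `a_{m₀}` plus strictly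
smaller terms: monomials with smaller `m_α` do not reach that degree, those with larger `m_α`
have smaller weight. An isometry from a dense subring into a complete ring extends uniquely by
continuity, and the extension is again isometric.
-/

open scoped BigOperators

/-- The weight `p^{-(t₁m₁+⋯+tₙmₙ)/(p-1)}` of the monomial `T^m` for the Gauss norm. -/
noncomputable def gaussWeight (p : ℕ) {n : ℕ} (t : Fin n → ℝ) (m : Fin n → ℤ) : ℝ :=
  (p : ℝ) ^ (-(∑ α, t α * (m α : ℝ)) / ((p : ℝ) - 1))

/-- The Gauss norm `‖Σ aₘ Tᵐ‖_t` on the polynomial ring `ℚ_p[T₁,…,Tₙ]`. -/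
noncomputable def polyGaussNorm (p : ℕ) [Fact p.Prime] {n : ℕ} (t : Fin n → ℝ)
    (f : MvPolynomial (Fin n) ℚ_[p]) : ℝ :=
  ⨆ m : Fin n →₀ ℕ, ‖MvPolynomial.coeff m f‖ * gaussWeight p t (fun α => (m α : ℤ))

/-- The `ℚ_p`-algebra endomorphism of `ℚ_p[T₁,…,Tₙ]` sending `T_α` to `(1+T_α)^p − 1`
and fixing the other variables. -/
noncomputable def frobSubst (p : ℕ) [Fact p.Prime] {n : ℕ} (α : Fin n) :
    MvPolynomial (Fin n) ℚ_[p] →ₐ[ℚ_[p]] MvPolynomial (Fin n) ℚ_[p] :=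
  MvPolynomial.aeval
    (fun β => if β = α then (1 + MvPolynomial.X α) ^ p - 1 else MvPolynomial.X β)

/-- A completion `Π_{[t,∞]}` of the polynomial ring `ℚ_p[T₁,…,Tₙ]` w.r.t. a norm `N`. -/
structure PolyGaussCompletion (p : ℕ) [Fact p.Prime] (n : ℕ)
    (N : MvPolynomial (Fin n) ℚ_[p] → ℝ) where
  carrier : Type
  [normedRing : NormedCommRing carrier]
  [normedAlgebra : NormedAlgebra ℚ_[p] carrier]
  [complete : CompleteSpace carrier]
  emb : MvPolynomial (Fin n) ℚ_[p] →ₐ[ℚ_[p]] carrier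
  isometric : ∀ f, ‖emb f‖ = N f
  denseRange : DenseRange (fun f => emb f)

attribute [instance] PolyGaussCompletion.normedRing PolyGaussCompletion.normedAlgebra
  PolyGaussCompletion.complete

open MvPolynomial

lemma norm_sum_mul_le_of_forall_le {V ι : Type*} [SeminormedAddCommGroup V] [IsUltrametricDist V]
    {t : Finset ι} {v : ι → V} {w C : ℝ} (hw : 0 < w) (hC : 0 ≤ C)
    (h : ∀ i ∈ t, ‖v i‖ * w ≤ C) : ‖∑ i ∈ t, v i‖ * w ≤ C := by
  rw [← le_div_iff₀ hw]
  exact IsUltrametricDist.norm_sum_le_of_forall_le_of_nonneg (div_nonneg hC hw.le)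
    fun i hi => (le_div_iff₀ hw).2 (h i hi)

section WeightedSupNorm

variable {K σ : Type*} [NormedField K]

noncomputable def monomialWeight (ρ : σ → ℝ) (m : σ →₀ ℕ) : ℝ :=
  m.prod fun β k => ρ β ^ k

noncomputable def weightedSupNorm (ρ : σ → ℝ) (f : MvPolynomial σ K) : ℝ :=
  ⨆ m, ‖coeff m f‖ * monomialWeight ρ m

variable {ρ : σ → ℝ}

lemma monomialWeight_pos (hρ : ∀ β, 0 < ρ β) (m : σ →₀ ℕ) : 0 < monomialWeight ρ m :=
  Finset.prod_pos fun β _ => pow_pos (hρ β) _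

lemma monomialWeight_eq_erase_mul [DecidableEq σ] (α : σ) (m : σ →₀ ℕ) :
    monomialWeight ρ m = monomialWeight ρ (m.erase α) * ρ α ^ m α :=
  (Finsupp.mul_prod_erase' m α _ fun _ => pow_zero _).symm.trans (mul_comm _ _)

lemma monomialWeight_update [DecidableEq σ] (α : σ) (r : ℝ) (m : σ →₀ ℕ) :
    monomialWeight (Function.update ρ α r) m = monomialWeight ρ (m.erase α) * r ^ m α := by
  rw [monomialWeight_eq_erase_mul α, Function.update_self]
  congr 1
  refine Finsupp.prod_congr fun β hβ => ?_
  rw [Finsupp.support_erase] at hβ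
  rw [Function.update_of_ne (Finset.ne_of_mem_erase hβ)]

lemma bddAbove_range_norm_coeff_mul_monomialWeight (hρ : ∀ β, 0 < ρ β) (f : MvPolynomial σ K) :
    BddAbove (Set.range fun m => ‖coeff m f‖ * monomialWeight ρ m) := by
  refine ⟨∑ m ∈ f.support, ‖coeff m f‖ * monomialWeight ρ m, ?_⟩
  have hnonneg : ∀ m, 0 ≤ ‖coeff m f‖ * monomialWeight ρ m := fun m =>
    mul_nonneg (norm_nonneg _) (monomialWeight_pos hρ m).le
  rintro _ ⟨m, rfl⟩
  by_cases hm : m ∈ f.support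
  · exact Finset.single_le_sum (fun m _ => hnonneg m) hm
  · simp only [notMem_support_iff.1 hm, norm_zero, zero_mul]
    exact Finset.sum_nonneg fun m _ => hnonneg m

lemma le_weightedSupNorm (hρ : ∀ β, 0 < ρ β) (f : MvPolynomial σ K) (m : σ →₀ ℕ) :
    ‖coeff m f‖ * monomialWeight ρ m ≤ weightedSupNorm ρ f :=
  le_ciSup (bddAbove_range_norm_coeff_mul_monomialWeight hρ f) m

lemma weightedSupNorm_nonneg (hρ : ∀ β, 0 < ρ β) (f : MvPolynomial σ K) :
    0 ≤ weightedSupNorm ρ f :=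
  (mul_nonneg (norm_nonneg _) (monomialWeight_pos hρ 0).le).trans (le_weightedSupNorm hρ f 0)

end WeightedSupNorm

section Substitution

variable {R σ : Type*} [CommRing R]

lemma add_single_eq_iff {α : σ} {m M : σ →₀ ℕ} (hm : m α = 0) (j : ℕ) :
    m + Finsupp.single α j = M ↔ M.erase α = m ∧ M α = j := by
  constructor
  · rintro rfl
    refine ⟨?_, by simp [hm]⟩
    rw [Finsupp.erase_add, Finsupp.erase_single, add_zero,
      Finsupp.erase_of_notMem_support (Finsupp.notMem_support_iff.2 hm)]
  · rintro ⟨rfl, rfl⟩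
    exact Finsupp.erase_add_single α M

variable [DecidableEq σ]

lemma coeff_monomial_mul_toMvPolynomial {α : σ} {m : σ →₀ ℕ} (hm : m α = 0) (a : R)
    (P : Polynomial R) (M : σ →₀ ℕ) :
    coeff M (monomial m a * P.toMvPolynomial α) =
      if M.erase α = m then a * P.coeff (M α) else 0 := by
  have hP : P.toMvPolynomial α = ∑ j ∈ P.support, monomial (Finsupp.single α j) (P.coeff j) := by
    conv_lhs => rw [P.as_sum_support]
    simp [Polynomial.toMvPolynomial, X_pow_eq_monomial, C_mul_monomial]
  simp only [hP, Finset.mul_sum, monomial_mul, coeff_sum, coeff_monomial, add_single_eq_iff hm]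
  rw [Finset.sum_eq_single (M α)]
  · simp
  · intro j _ hj
    simp [Ne.symm hj]
  · intro hj
    simp [Polynomial.notMem_support_iff.1 hj]

noncomputable def substVar (α : σ) (G : Polynomial R) : MvPolynomial σ R →ₐ[R] MvPolynomial σ R :=
  aeval (Function.update X α (G.toMvPolynomial α))

lemma substVar_monomial (α : σ) (G : Polynomial R) (m : σ →₀ ℕ) (a : R) :
    substVar α G (monomial m a) = monomial (m.erase α) a * (G ^ m α).toMvPolynomial α := by
  rw [substVar, aeval_monomial, map_pow,
    ← Finsupp.mul_prod_erase' m α (fun β k => Function.update X α (G.toMvPolynomial α) β ^ k)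
      fun _ => pow_zero _,
    Function.update_self, algebraMap_eq, monomial_eq (s := m.erase α), mul_comm (_ ^ _),
    ← mul_assoc]
  congr 2
  refine Finsupp.prod_congr fun β hβ => ?_
  rw [Finsupp.support_erase] at hβ
  rw [Function.update_of_ne (Finset.ne_of_mem_erase hβ)]

lemma coeff_substVar (α : σ) (G : Polynomial R) (f : MvPolynomial σ R) (M : σ →₀ ℕ) :
    coeff M (substVar α G f) = ∑ m ∈ f.support,
      if M.erase α = m.erase α then coeff m f * (G ^ m α).coeff (M α) else 0 := by
  conv_lhs => rw [f.as_sum]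
  simp only [map_sum, coeff_sum, substVar_monomial,
    coeff_monomial_mul_toMvPolynomial Finsupp.erase_same]

end Substitution

section Isometry

variable {K σ : Type*} [NormedField K] [IsUltrametricDist K]

lemma norm_coeff_pow_mul_pow_le {G : Polynomial K} {r : ℝ} (hr : 0 < r) {d : ℕ}
    (hG : ∀ j, ‖G.coeff j‖ * r ^ j ≤ r ^ d) (k j : ℕ) :
    ‖(G ^ k).coeff j‖ * r ^ j ≤ r ^ (d * k) := by
  induction k generalizing j with
  | zero =>
    rcases eq_or_ne j 0 with rfl | hj
    · simp
    · simp [Polynomial.coeff_one, hj]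
  | succ k ih =>
    rw [pow_succ, Polynomial.coeff_mul]
    refine norm_sum_mul_le_of_forall_le (pow_pos hr j) (by positivity) fun x hx => ?_
    rw [← Finset.HasAntidiagonal.mem_antidiagonal.1 hx, norm_mul, pow_add, mul_add, mul_one,
      pow_add]
    calc ‖(G ^ k).coeff x.1‖ * ‖G.coeff x.2‖ * (r ^ x.1 * r ^ x.2)
        = (‖(G ^ k).coeff x.1‖ * r ^ x.1) * (‖G.coeff x.2‖ * r ^ x.2) := by ring
      _ ≤ r ^ (d * k) * r ^ d := by gcongr; exacts [ih x.1, hG x.2]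

variable [DecidableEq σ] {ρ : σ → ℝ}

lemma update_pow_pos (hρ : ∀ β, 0 < ρ β) (α : σ) (d : ℕ) :
    ∀ β, 0 < Function.update ρ α (ρ α ^ d) β :=
  (Function.forall_update_iff _ fun _ r => 0 < r).2 ⟨pow_pos (hρ α) d, fun β _ => hρ β⟩

lemma norm_mul_coeff_pow_mul_monomialWeight_le (hρ : ∀ β, 0 < ρ β) {α : σ} {G : Polynomial K}
    (hG : ∀ j, ‖G.coeff j‖ * ρ α ^ j ≤ ρ α ^ G.natDegree) {m M : σ →₀ ℕ}
    (hmM : M.erase α = m.erase α) (a : K) :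
    ‖a * (G ^ m α).coeff (M α)‖ * monomialWeight ρ M ≤
      ‖a‖ * monomialWeight (Function.update ρ α (ρ α ^ G.natDegree)) m := by
  rw [monomialWeight_eq_erase_mul α M, monomialWeight_update, hmM, norm_mul, ← pow_mul]
  calc ‖a‖ * ‖(G ^ m α).coeff (M α)‖ * (monomialWeight ρ (m.erase α) * ρ α ^ M α)
      = ‖a‖ * (‖(G ^ m α).coeff (M α)‖ * ρ α ^ M α) * monomialWeight ρ (m.erase α) := by ring
    _ ≤ ‖a‖ * ρ α ^ (G.natDegree * m α) * monomialWeight ρ (m.erase α) := by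
      gcongr
      · exact (monomialWeight_pos hρ _).le
      · exact norm_coeff_pow_mul_pow_le (hρ α) hG _ _
    _ = _ := by ring

lemma weightedSupNorm_substVar_le (hρ : ∀ β, 0 < ρ β) (α : σ) {G : Polynomial K}
    (hG : ∀ j, ‖G.coeff j‖ * ρ α ^ j ≤ ρ α ^ G.natDegree) (f : MvPolynomial σ K) :
    weightedSupNorm ρ (substVar α G f) ≤
      weightedSupNorm (Function.update ρ α (ρ α ^ G.natDegree)) f := by
  have hρ' := update_pow_pos hρ α G.natDegree
  refine ciSup_le fun M => ?_
  rw [coeff_substVar]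
  refine norm_sum_mul_le_of_forall_le (monomialWeight_pos hρ M) (weightedSupNorm_nonneg hρ' f)
    fun m _ => ?_
  split_ifs with hmM
  · exact (norm_mul_coeff_pow_mul_monomialWeight_le hρ hG hmM _).trans
      (le_weightedSupNorm hρ' f m)
  · simpa using weightedSupNorm_nonneg hρ' f

lemma norm_coeff_substVar_of_isMax (hρ : ∀ β, 0 < ρ β) {α : σ} {G : Polynomial K}
    (hGm : G.Monic) (hGd : 0 < G.natDegree)
    (hG : ∀ j, ‖G.coeff j‖ * ρ α ^ j ≤ ρ α ^ G.natDegree) {f : MvPolynomial σ K}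
    {m₀ : σ →₀ ℕ} (hm₀ : m₀ ∈ f.support)
    (hmax : ∀ m ∈ f.support,
      toLex (‖coeff m f‖ * monomialWeight (Function.update ρ α (ρ α ^ G.natDegree)) m, m α) ≤
      toLex (‖coeff m₀ f‖ * monomialWeight (Function.update ρ α (ρ α ^ G.natDegree)) m₀, m₀ α))
    {M₀ : σ →₀ ℕ} (hM₀ : M₀.erase α = m₀.erase α) (hM₀α : M₀ α = G.natDegree * m₀ α) :
    ‖coeff M₀ (substVar α G f)‖ = ‖coeff m₀ f‖ := by
  set ρ' := Function.update ρ α (ρ α ^ G.natDegree)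
  have hc₀ : 0 < ‖coeff m₀ f‖ := norm_pos_iff.2 (mem_support_iff.1 hm₀)
  have hrest : ∀ m ∈ f.support.erase m₀,
      ‖if M₀.erase α = m.erase α then coeff m f * (G ^ m α).coeff (M₀ α) else 0‖ <
        ‖coeff m₀ f‖ := by
    intro m hm
    obtain ⟨hne, hm⟩ := Finset.mem_erase.1 hm
    split_ifs with hmM
    swap
    · simpa using hc₀
    have hα : m α ≠ m₀ α := fun h => hne <| by
      rw [← Finsupp.erase_add_single α m, ← Finsupp.erase_add_single α m₀, ← hmM, hM₀, h]
    rcases hα.lt_or_gt with hlt | hgt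
    · rw [Polynomial.coeff_eq_zero_of_natDegree_lt, mul_zero, norm_zero]
      · exact hc₀
      rw [hGm.natDegree_pow, hM₀α, mul_comm]
      exact Nat.mul_lt_mul_of_pos_left hlt hGd
    · have hW : ‖coeff m f‖ * monomialWeight ρ' m < ‖coeff m₀ f‖ * monomialWeight ρ' m₀ := by
        rcases Prod.Lex.toLex_le_toLex.1 (hmax m hm) with h | ⟨_, h⟩
        · exact h
        · exact absurd h hgt.not_ge
      refine lt_of_mul_lt_mul_right ?_ (monomialWeight_pos hρ M₀).le
      calc _ ≤ ‖coeff m f‖ * monomialWeight ρ' m :=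
            norm_mul_coeff_pow_mul_monomialWeight_le hρ hG hmM _
        _ < ‖coeff m₀ f‖ * monomialWeight ρ' m₀ := hW
        _ = ‖coeff m₀ f‖ * monomialWeight ρ M₀ := by
          rw [monomialWeight_update, monomialWeight_eq_erase_mul α M₀, hM₀, hM₀α, pow_mul]
  have hsum_lt : ‖∑ m ∈ f.support.erase m₀,
      if M₀.erase α = m.erase α then coeff m f * (G ^ m α).coeff (M₀ α) else 0‖ <
        ‖coeff m₀ f‖ := by
    rcases (f.support.erase m₀).eq_empty_or_nonempty with he | hne
    · simpa [he] using hc₀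
    · exact (hne.norm_sum_le_sup'_norm _).trans_lt ((Finset.sup'_lt_iff hne).2 hrest)
  have hlead : (G ^ m₀ α).coeff (M₀ α) = 1 := by
    rw [hM₀α, mul_comm, ← hGm.natDegree_pow, (hGm.pow _).coeff_natDegree]
  rw [coeff_substVar, ← Finset.add_sum_erase _ _ hm₀, if_pos hM₀, hlead, mul_one,
    IsUltrametricDist.norm_add_eq_max_of_norm_ne_norm (hsum_lt.ne' : ‖coeff m₀ f‖ ≠ _),
    max_eq_left hsum_lt.le]

lemma weightedSupNorm_le_weightedSupNorm_substVar (hρ : ∀ β, 0 < ρ β) (α : σ)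
    {G : Polynomial K} (hGm : G.Monic) (hGd : 0 < G.natDegree)
    (hG : ∀ j, ‖G.coeff j‖ * ρ α ^ j ≤ ρ α ^ G.natDegree) (f : MvPolynomial σ K) :
    weightedSupNorm (Function.update ρ α (ρ α ^ G.natDegree)) f ≤
      weightedSupNorm ρ (substVar α G f) := by
  set ρ' := Function.update ρ α (ρ α ^ G.natDegree)
  have hρ' : ∀ β, 0 < ρ' β := update_pow_pos hρ α G.natDegree
  rcases eq_or_ne f 0 with rfl | hf
  · simp [weightedSupNorm]
  obtain ⟨m₀, hm₀, hmax⟩ := f.support.exists_max_image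
    (fun m => toLex (‖coeff m f‖ * monomialWeight ρ' m, m α)) (support_nonempty.2 hf)
  set M₀ := m₀.erase α + Finsupp.single α (G.natDegree * m₀ α)
  have hM₀ : M₀.erase α = m₀.erase α := by
    rw [Finsupp.erase_add, Finsupp.erase_single, add_zero, Finsupp.erase_idem]
  have hM₀α : M₀ α = G.natDegree * m₀ α := by simp [M₀]
  calc weightedSupNorm ρ' f ≤ ‖coeff m₀ f‖ * monomialWeight ρ' m₀ := by
        refine ciSup_le fun m => ?_
        by_cases hm : m ∈ f.support
        · exact (Prod.Lex.toLex_le_toLex'.1 (hmax m hm)).1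
        · rw [notMem_support_iff.1 hm, norm_zero, zero_mul]
          exact mul_nonneg (norm_nonneg _) (monomialWeight_pos hρ' m₀).le
    _ = ‖coeff M₀ (substVar α G f)‖ * monomialWeight ρ M₀ := by
      rw [norm_coeff_substVar_of_isMax hρ hGm hGd hG hm₀ hmax hM₀ hM₀α, monomialWeight_update,
        monomialWeight_eq_erase_mul α M₀, hM₀, hM₀α, pow_mul]
    _ ≤ weightedSupNorm ρ (substVar α G f) := le_weightedSupNorm hρ _ _

theorem weightedSupNorm_substVar (hρ : ∀ β, 0 < ρ β) (α : σ)
    {G : Polynomial K} (hGm : G.Monic) (hGd : 0 < G.natDegree)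
    (hG : ∀ j, ‖G.coeff j‖ * ρ α ^ j ≤ ρ α ^ G.natDegree) (f : MvPolynomial σ K) :
    weightedSupNorm ρ (substVar α G f) =
      weightedSupNorm (Function.update ρ α (ρ α ^ G.natDegree)) f :=
  (weightedSupNorm_substVar_le hρ α hG f).antisymm
    (weightedSupNorm_le_weightedSupNorm_substVar hρ α hGm hGd hG f)

end Isometry

lemma Polynomial.monic_one_add_X_pow (R : Type*) [CommSemiring R] (n : ℕ) :
    ((1 + Polynomial.X : Polynomial R) ^ n).Monic :=
  (add_comm Polynomial.X (1 : Polynomial R) ▸ Polynomial.monic_X_add_C 1).pow n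

lemma Polynomial.natDegree_one_add_X_pow (R : Type*) [CommSemiring R] [Nontrivial R] (n : ℕ) :
    ((1 + Polynomial.X : Polynomial R) ^ n).natDegree = n := by
  rw [add_comm, ← map_one Polynomial.C, (Polynomial.monic_X_add_C 1).natDegree_pow,
    Polynomial.natDegree_X_add_C, mul_one]

section Frobenius

variable {p : ℕ}

noncomputable def gaussRadius (p : ℕ) (t : ℝ) : ℝ := (p : ℝ) ^ (-t / ((p : ℝ) - 1))

lemma gaussRadius_natCast_mul (t : ℝ) : gaussRadius p (p * t) = gaussRadius p t ^ p := by
  rw [gaussRadius, gaussRadius, ← Real.rpow_mul_natCast (Nat.cast_nonneg p)]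
  ring_nf

variable [hp : Fact p.Prime]

noncomputable def frobPoly (p : ℕ) [Fact p.Prime] : Polynomial ℚ_[p] :=
  (1 + Polynomial.X) ^ p - 1

lemma frobPoly_natDegree : (frobPoly p).natDegree = p := by
  rw [frobPoly, Polynomial.natDegree_sub_eq_left_of_natDegree_lt,
    Polynomial.natDegree_one_add_X_pow]
  rw [Polynomial.natDegree_one_add_X_pow, Polynomial.natDegree_one]
  exact hp.out.pos

lemma frobPoly_monic : (frobPoly p).Monic := by
  refine (Polynomial.monic_one_add_X_pow _ p).sub_of_left ?_
  rw [Polynomial.degree_one, ← Polynomial.natDegree_pos_iff_degree_pos,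
    Polynomial.natDegree_one_add_X_pow]
  exact hp.out.pos

lemma norm_natCast_le_inv_of_dvd {k : ℕ} (h : p ∣ k) : ‖(k : ℚ_[p])‖ ≤ (p : ℝ)⁻¹ := by
  obtain ⟨c, rfl⟩ := h
  rw [Nat.cast_mul, norm_mul, Padic.norm_p]
  exact mul_le_of_le_one_right (by positivity) (by simpa using Padic.norm_int_le_one (c : ℤ))

lemma norm_coeff_frobPoly_mul_pow_le {r : ℝ} (hr : 0 < r) (hpr : (p : ℝ)⁻¹ ≤ r ^ (p - 1))
    (j : ℕ) : ‖(frobPoly p).coeff j‖ * r ^ j ≤ r ^ p := by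
  have hcoeff : (frobPoly p).coeff j = p.choose j - if j = 0 then 1 else 0 := by
    rw [frobPoly, Polynomial.coeff_sub, Polynomial.coeff_one_add_X_pow, Polynomial.coeff_one]
  rcases Nat.eq_zero_or_pos j with rfl | hj0
  · simpa [hcoeff] using (pow_pos hr p).le
  rcases lt_trichotomy j p with hjp | rfl | hjp
  · rw [hcoeff, if_neg hj0.ne', sub_zero, ← le_div_iff₀ (pow_pos hr j), div_eq_mul_inv,
      ← pow_sub₀ _ hr.ne' hjp.le]
    refine (norm_natCast_le_inv_of_dvd (hp.out.dvd_choose_self hj0.ne' hjp)).trans ?_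
    rcases le_total r 1 with hr1 | hr1
    · exact hpr.trans (pow_le_pow_of_le_one hr.le hr1 (by omega))
    · exact (inv_le_one_of_one_le₀ (by exact_mod_cast hp.out.one_le)).trans (one_le_pow₀ hr1)
  · simp [hcoeff, hj0.ne']
  · simpa [hcoeff, hj0.ne', Nat.choose_eq_zero_of_lt hjp] using (pow_pos hr p).le

lemma frobSubst_eq_substVar {n : ℕ} (α : Fin n) : frobSubst p α = substVar α (frobPoly p) := by
  unfold frobSubst substVar
  congr 1
  funext β
  rcases eq_or_ne β α with rfl | hβ
  · simp [frobPoly, Polynomial.toMvPolynomial]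
  · simp [hβ]

lemma gaussRadius_pos (t : ℝ) : 0 < gaussRadius p t :=
  Real.rpow_pos_of_pos (by exact_mod_cast hp.out.pos) _

lemma inv_le_gaussRadius_pow {t : ℝ} (ht : t ≤ 1) : (p : ℝ)⁻¹ ≤ gaussRadius p t ^ (p - 1) := by
  have hp1 : (1 : ℝ) < p := by exact_mod_cast hp.out.one_lt
  rw [gaussRadius, ← Real.rpow_mul_natCast (Nat.cast_nonneg p), Nat.cast_sub hp.out.one_le,
    Nat.cast_one, div_mul_cancel₀ _ (sub_pos.2 hp1).ne', ← Real.rpow_neg_one]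
  exact Real.rpow_le_rpow_of_exponent_le hp1.le (neg_le_neg ht)

lemma gaussWeight_eq_monomialWeight {n : ℕ} (t : Fin n → ℝ) (m : Fin n →₀ ℕ) :
    gaussWeight p t (fun β => (m β : ℤ)) = monomialWeight (fun β => gaussRadius p (t β)) m := by
  have hexp : -(∑ β, t β * ((m β : ℤ) : ℝ)) / ((p : ℝ) - 1) =
      ∑ β, -t β / ((p : ℝ) - 1) * m β := by
    rw [neg_div, Finset.sum_div, ← Finset.sum_neg_distrib]
    refine Finset.sum_congr rfl fun β _ => ?_
    push_cast
    ring
  rw [gaussWeight, hexp, Real.rpow_sum_of_pos (by exact_mod_cast hp.out.pos), monomialWeight,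
    Finsupp.prod_fintype _ _ fun _ => pow_zero _]
  exact Finset.prod_congr rfl fun β _ => Real.rpow_mul_natCast (Nat.cast_nonneg p) _ _

lemma polyGaussNorm_eq_weightedSupNorm {n : ℕ} (t : Fin n → ℝ) :
    polyGaussNorm p t = weightedSupNorm fun β => gaussRadius p (t β) := by
  funext f
  simp only [polyGaussNorm, weightedSupNorm, gaussWeight_eq_monomialWeight]

theorem polyGaussNorm_frobSubst {n : ℕ} {α : Fin n} {s : Fin n → ℝ} (hsα : s α ≤ 1)
    (f : MvPolynomial (Fin n) ℚ_[p]) :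
    polyGaussNorm p s (frobSubst p α f) =
      polyGaussNorm p (Function.update s α ((p : ℝ) * s α)) f := by
  have hupdate : (fun β => gaussRadius p (Function.update s α ((p : ℝ) * s α) β)) =
      Function.update (fun β => gaussRadius p (s β)) α
        (gaussRadius p (s α) ^ (frobPoly p).natDegree) := by
    rw [frobPoly_natDegree, ← gaussRadius_natCast_mul]
    exact funext (Function.apply_update (fun _ => gaussRadius p) s α _)
  rw [polyGaussNorm_eq_weightedSupNorm, polyGaussNorm_eq_weightedSupNorm, hupdate,
    frobSubst_eq_substVar]
  refine weightedSupNorm_substVar (fun _ => gaussRadius_pos _) α frobPoly_monic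
    (by rw [frobPoly_natDegree]; exact hp.out.pos) ?_ f
  rw [frobPoly_natDegree]
  exact norm_coeff_frobPoly_mul_pow_le (gaussRadius_pos _) (inv_le_gaussRadius_pow hsα)

end Frobenius

section DenseExtension

theorem isometry_of_denseRange_of_norm_eq {ι E F 𝓕 : Type*} [SeminormedAddCommGroup E]
    [SeminormedAddCommGroup F] [FunLike 𝓕 E F] [AddMonoidHomClass 𝓕 E F] {e : ι → E}
    (he : DenseRange e) {Φ : 𝓕} (hΦ : Continuous Φ) (h : ∀ i, ‖Φ (e i)‖ = ‖e i‖) :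
    Isometry Φ :=
  (AddMonoidHomClass.isometry_iff_norm Φ).2 <| congrFun <|
    he.equalizer (continuous_norm.comp hΦ) continuous_norm (funext h)

variable {R A E F : Type*} [CommSemiring R] [Ring A] [Algebra R A] [NormedRing E] [Algebra R E]
  [NormedRing F] [Algebra R F]

theorem AlgHom.existsUnique_continuous_extension [CompleteSpace F] {e : A →ₐ[R] E}
    (he : DenseRange e) {g : A →ₐ[R] F} (hg : ∀ a, ‖g a‖ = ‖e a‖) :
    ∃! Φ : E →ₐ[R] F, Continuous Φ ∧ ∀ a, Φ (e a) = g a := by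
  let _ : PseudoMetricSpace A := PseudoMetricSpace.induced e inferInstance
  have he_iso : Isometry e := Isometry.of_dist_eq fun _ _ => rfl
  have hg_iso : Isometry g := Isometry.of_dist_eq fun a b => by
    rw [dist_eq_norm, ← map_sub, hg, map_sub, ← dist_eq_norm]
    rfl
  set Φ := IsDenseInducing.extendRingHom (i := e.toRingHom) (f := g.toRingHom)
    he_iso.isUniformInducing he hg_iso.uniformContinuous
  have hΦe : ∀ a, Φ (e a) = g a :=
    (he_iso.isUniformInducing.isDenseInducing he).extend_eq hg_iso.continuous
  have hΦc : Continuous Φ :=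
    (uniformContinuous_uniformly_extend he_iso.isUniformInducing he
      hg_iso.uniformContinuous).continuous
  refine ⟨{ Φ with commutes' := fun c => by simpa using hΦe (algebraMap R A c) }, ⟨hΦc, hΦe⟩,
    fun Ψ ⟨hΨc, hΨe⟩ => DFunLike.coe_injective ?_⟩
  exact he.equalizer hΨc hΦc (funext fun a => (hΨe a).trans (hΦe a).symm)

end DenseExtension

theorem frobSubst_isometric_extension_general
    (p : ℕ) [Fact p.Prime] (n : ℕ) (α : Fin n) (s : Fin n → ℝ)
    (hsα : s α ≤ 1)
    (D : PolyGaussCompletion p n (polyGaussNorm p s))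
    (D' : PolyGaussCompletion p n (polyGaussNorm p (Function.update s α ((p : ℝ) * s α)))) :
    (∀ f : MvPolynomial (Fin n) ℚ_[p],
      polyGaussNorm p s (frobSubst p α f) =
        polyGaussNorm p (Function.update s α ((p : ℝ) * s α)) f) ∧
    (∃! Φ : D'.carrier →ₐ[ℚ_[p]] D.carrier, Continuous Φ ∧
      ∀ f, Φ (D'.emb f) = D.emb (frobSubst p α f)) ∧
    (∀ Φ : D'.carrier →ₐ[ℚ_[p]] D.carrier, Continuous Φ →
      (∀ f, Φ (D'.emb f) = D.emb (frobSubst p α f)) →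
      (∀ F, ‖Φ F‖ = ‖F‖) ∧ Function.Injective Φ) := by
  have hnorm : ∀ f, ‖D.emb (frobSubst p α f)‖ = ‖D'.emb f‖ := fun f => by
    rw [D.isometric, D'.isometric, polyGaussNorm_frobSubst hsα]
  refine ⟨fun f => polyGaussNorm_frobSubst hsα f,
    AlgHom.existsUnique_continuous_extension D'.denseRange (g := D.emb.comp (frobSubst p α)) hnorm,
    fun Φ hΦ hΦe => ?_⟩
  have hiso : Isometry Φ :=
    isometry_of_denseRange_of_norm_eq D'.denseRange hΦ fun f => by rw [hΦe, hnorm]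
  exact ⟨(AddMonoidHomClass.isometry_iff_norm Φ).1 hiso, hiso.injective⟩

/-- The partial Frobenius substitution `T_α ↦ (1+T_α)^p − 1` satisfies
`‖φ_α(f)‖_s = ‖f‖_{s'}` (where `s'_α = p·s_α`, `s'_β = s_β` otherwise) on polynomials, and
hence extends uniquely to an isometric, in particular injective, continuous `ℚ_p`-algebra
homomorphism `φ_α : Π_{[s',∞]} → Π_{[s,∞]}` between the completions. -/
theorem frobSubst_isometric_extension
    (p : ℕ) [Fact p.Prime] (n : ℕ) (α : Fin n) (s : Fin n → ℝ)
    (hs : ∀ β, 0 < s β) (hsα : s α ≤ 1)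
    (D : PolyGaussCompletion p n (polyGaussNorm p s))
    (D' : PolyGaussCompletion p n (polyGaussNorm p (Function.update s α ((p : ℝ) * s α)))) :
    (∀ f : MvPolynomial (Fin n) ℚ_[p],
      polyGaussNorm p s (frobSubst p α f) =
        polyGaussNorm p (Function.update s α ((p : ℝ) * s α)) f) ∧
    (∃! Φ : D'.carrier →ₐ[ℚ_[p]] D.carrier, Continuous Φ ∧
      ∀ f, Φ (D'.emb f) = D.emb (frobSubst p α f)) ∧
    (∀ Φ : D'.carrier →ₐ[ℚ_[p]] D.carrier, Continuous Φ →
      (∀ f, Φ (D'.emb f) = D.emb (frobSubst p α f)) →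
      (∀ F, ‖Φ F‖ = ‖F‖) ∧ Function.Injective Φ) :=
  frobSubst_isometric_extension_general p n α s hsα D D'
end

section
/- Let s'', s', r', r'' be tuples of positive reals with s''_α < s'_α ≤ r'_α < r''_α for all α. Then the canonical continuous ring homomorphism Π_{[s'',r'']} → Π_{[s',r']} (the unique continuous extension of the identity on Laurent polynomials) is a completely continuous ℚ_p-linear operator: it is the limit, in the operator-norm topology on bounded ℚ_p-linear maps Π_{[s'',r'']} → Π_{[s',r']}, of the finite-rank truncation operators Σ_{m∈ℤ^n} a_m T^m ↦ Σ_{|m_α| ≤ N for all α} a_m T^m as N → ∞. -/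
open scoped BigOperators

/-- The Gauss norm `‖Σ aₘ Tᵐ‖_t` on the Laurent polynomial ring
`ℚ_p[T₁^{±1},…,Tₙ^{±1}]`, realized as the monoid algebra of `ℤⁿ` over `ℚ_p`. -/
noncomputable def gaussNorm (p : ℕ) [Fact p.Prime] {n : ℕ} (t : Fin n → ℝ)
    (f : AddMonoidAlgebra ℚ_[p] (Fin n → ℤ)) : ℝ :=
  ⨆ m : Fin n → ℤ, ‖f.coeff m‖ * gaussWeight p t m

/-- The corner tuple of the box `∏ [sα, rα]` indexed by `c : Fin n → Bool`. -/
def corner {n : ℕ} (s r : Fin n → ℝ) (c : Fin n → Bool) : Fin n → ℝ :=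
  fun α => if c α then r α else s α

/-- The interval norm `‖f‖_{[s,r]}`: the maximum of the Gauss norms over the `2ⁿ` corners. -/
noncomputable def intervalGaussNorm (p : ℕ) [Fact p.Prime] {n : ℕ} (s r : Fin n → ℝ)
    (f : AddMonoidAlgebra ℚ_[p] (Fin n → ℤ)) : ℝ :=
  ⨆ c : Fin n → Bool, gaussNorm p (corner s r c) f

/-- Truncation of a Laurent polynomial: keep only the monomials `Tᵐ` with `|m_α| ≤ N`. -/
noncomputable def laurentTruncate (p : ℕ) [Fact p.Prime] {n : ℕ} (N : ℕ)
    (f : AddMonoidAlgebra ℚ_[p] (Fin n → ℤ)) : AddMonoidAlgebra ℚ_[p] (Fin n → ℤ) :=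
  AddMonoidAlgebra.ofCoeff (Finsupp.filter (fun m => ∀ α, |m α| ≤ (N : ℤ)) f.coeff)

/-- A completion `Π_{[s,r]}` of the Laurent polynomial ring with respect to a norm `N`. -/
structure GaussCompletion (p : ℕ) [Fact p.Prime] (n : ℕ)
    (N : AddMonoidAlgebra ℚ_[p] (Fin n → ℤ) → ℝ) where
  carrier : Type
  [normedRing : NormedCommRing carrier]
  [normedAlgebra : NormedAlgebra ℚ_[p] carrier]
  [complete : CompleteSpace carrier]
  emb : AddMonoidAlgebra ℚ_[p] (Fin n → ℤ) →ₐ[ℚ_[p]] carrier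
  isometric : ∀ f, ‖emb f‖ = N f
  denseRange : DenseRange (fun f => emb f)

attribute [instance] GaussCompletion.normedRing GaussCompletion.normedAlgebra
  GaussCompletion.complete

/-!
The weight of `Tᵐ` at a tuple `t` is `p^{-⟨t, m⟩/(p-1)}`. Fix `m` and send each coordinate to the
end of `[s'', r'']` where `t ↦ tα mα` is smallest (`r''` if `mα < 0`, `s''` otherwise). Since
`[s', r']` lies inside `[s'', r'']` with a margin `δ > 0` on both sides, the weight at any point of
`[s', r']` is at most `q^{|m₁|+⋯+|mₙ|}` times the weight at that corner, where
`q = p^{-δ/(p-1)} < 1`. Hence the restriction does not increase norms, and the part of `f` outside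
the box `|mα| ≤ N` has `[s', r']`-norm at most `q^{N+1} ‖f‖_{[s'',r'']}`. Extending the truncations
by continuity gives finite-rank operators converging to the restriction map at rate `q^{N+1}`.
-/

local notation "𝓛" p:max n:max => AddMonoidAlgebra ℚ_[p] (Fin n → ℤ)

section GaussWeight

variable {p n : ℕ}

theorem gaussWeight_pos (hp : 0 < p) (t : Fin n → ℝ) (m : Fin n → ℤ) : 0 < gaussWeight p t m :=
  Real.rpow_pos_of_pos (Nat.cast_pos.2 hp) _

theorem corner_mem_Icc {s r : Fin n → ℝ} (hsr : ∀ α, s α ≤ r α) (c : Fin n → Bool) (α : Fin n) :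
    corner s r c α ∈ Set.Icc (s α) (r α) := by
  unfold corner
  split_ifs <;> simp [hsr α]

theorem corner_mul_add_le {s r t : Fin n → ℝ} {δ : ℝ} (ht : ∀ α, s α + δ ≤ t α ∧ t α + δ ≤ r α)
    (m : Fin n → ℤ) (α : Fin n) :
    corner s r (fun β => decide (m β < 0)) α * m α + δ * |(m α : ℝ)| ≤ t α * m α := by
  obtain ⟨hs, hr⟩ := ht α
  rcases lt_or_ge (m α) 0 with hneg | hnonneg
  · have hm : (m α : ℝ) < 0 := by exact_mod_cast hneg
    simp only [corner, hneg, decide_true, if_true, abs_of_neg hm]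
    nlinarith
  · have hm : (0 : ℝ) ≤ m α := by exact_mod_cast hnonneg
    simp only [corner, not_lt.2 hnonneg, decide_false, Bool.false_eq_true, if_false,
      abs_of_nonneg hm]
    nlinarith

theorem gaussWeight_le_pow_mul (hp : 1 < p) {s r t : Fin n → ℝ} {δ : ℝ}
    (ht : ∀ α, s α + δ ≤ t α ∧ t α + δ ≤ r α) (m : Fin n → ℤ) :
    gaussWeight p t m ≤ ((p : ℝ) ^ (-δ / ((p : ℝ) - 1))) ^ (∑ α, (m α).natAbs) *
      gaussWeight p (corner s r fun α => decide (m α < 0)) m := by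
  have hp' : (1 : ℝ) < p := by exact_mod_cast hp
  have hsum : ∑ α, corner s r (fun β => decide (m β < 0)) α * m α + δ * ∑ α, |(m α : ℝ)| ≤
      ∑ α, t α * m α := by
    rw [Finset.mul_sum, ← Finset.sum_add_distrib]
    exact Finset.sum_le_sum fun α _ => corner_mul_add_le ht m α
  rw [gaussWeight, gaussWeight, ← Real.rpow_natCast, ← Real.rpow_mul (by positivity),
    ← Real.rpow_add (by positivity)]
  apply Real.rpow_le_rpow_of_exponent_le hp'.le
  push_cast [Nat.cast_natAbs]
  rw [div_mul_eq_mul_div, ← add_div]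
  exact div_le_div_of_nonneg_right (by linarith) (by linarith)

end GaussWeight

theorem finite_setOf_forall_abs_le {ι : Type*} [Finite ι] (N : ℕ) :
    {m : ι → ℤ | ∀ i, |m i| ≤ (N : ℤ)}.Finite := by
  convert Set.Finite.pi (t := fun _ : ι => Set.Icc (-(N : ℤ)) N) fun _ => Set.finite_Icc _ _
  ext m
  simp [abs_le, Pi.le_def, forall_and]

theorem lt_sum_natAbs_of_not_forall_abs_le {n N : ℕ} {m : Fin n → ℤ}
    (hm : ¬ ∀ α, |m α| ≤ (N : ℤ)) : N < ∑ α, (m α).natAbs := by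
  obtain ⟨β, hβ⟩ := not_forall.1 hm
  have hβ' : N < (m β).natAbs := by rw [Int.abs_eq_natAbs] at hβ; omega
  exact hβ'.trans_le (Finset.single_le_sum (f := fun α => (m α).natAbs)
    (fun α _ => Nat.zero_le _) (Finset.mem_univ β))

theorem exists_pos_forall_add_le {ι : Type*} [Finite ι] {s'' s' r' r'' : ι → ℝ}
    (hs : ∀ i, s'' i < s' i) (hr : ∀ i, r' i < r'' i) :
    ∃ δ > 0, ∀ i, s'' i + δ ≤ s' i ∧ r' i + δ ≤ r'' i := by
  have hsmall : ∀ᶠ δ in nhdsWithin (0 : ℝ) (Set.Ioi 0), ∀ i, s'' i + δ ≤ s' i ∧ r' i + δ ≤ r'' i :=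
    Filter.eventually_all.2 fun i => nhdsWithin_le_nhds <|
      ((eventually_lt_nhds (sub_pos.2 (hs i))).and (eventually_lt_nhds (sub_pos.2 (hr i)))).mono
        fun δ hδ => ⟨by linarith [hδ.1], by linarith [hδ.2]⟩
  obtain ⟨δ, hδ, hpos⟩ := (hsmall.and self_mem_nhdsWithin).exists
  exact ⟨δ, hpos, hδ⟩

section GaussNorm

variable (p : ℕ) [Fact p.Prime] {n : ℕ}

theorem le_gaussNorm (t : Fin n → ℝ) (f : 𝓛 p n) (m : Fin n → ℤ) :
    ‖f.coeff m‖ * gaussWeight p t m ≤ gaussNorm p t f := by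
  have hfin : (Set.range fun m => ‖f.coeff m‖ * gaussWeight p t m).Finite := by
    refine ((f.coeff.support.finite_toSet.image fun m => ‖f.coeff m‖ * gaussWeight p t m).insert
      0).subset ?_
    rintro _ ⟨m, rfl⟩
    by_cases hm : f.coeff m = 0
    · simp [hm]
    · exact Or.inr ⟨m, Finsupp.mem_support_iff.2 hm, rfl⟩
  exact le_ciSup hfin.bddAbove m

theorem gaussNorm_le (t : Fin n → ℝ) (f : 𝓛 p n) {C : ℝ}
    (h : ∀ m, ‖f.coeff m‖ * gaussWeight p t m ≤ C) : gaussNorm p t f ≤ C :=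
  ciSup_le h

theorem gaussNorm_le_intervalGaussNorm (s r : Fin n → ℝ) (c : Fin n → Bool) (f : 𝓛 p n) :
    gaussNorm p (corner s r c) f ≤ intervalGaussNorm p s r f :=
  le_ciSup (f := fun c => gaussNorm p (corner s r c) f) (Set.finite_range _).bddAbove c

theorem intervalGaussNorm_le (s r : Fin n → ℝ) (f : 𝓛 p n) {C : ℝ}
    (h : ∀ c, gaussNorm p (corner s r c) f ≤ C) : intervalGaussNorm p s r f ≤ C :=
  ciSup_le h

variable {p}

theorem intervalGaussNorm_le_mul_of_norm_coeff_le {s'' s' r' r'' : Fin n → ℝ} {δ K : ℝ}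
    (hsr : ∀ α, s' α ≤ r' α) (hδ : ∀ α, s'' α + δ ≤ s' α ∧ r' α + δ ≤ r'' α) (hK : 0 ≤ K)
    {f g : 𝓛 p n}
    (h : ∀ m, ‖g.coeff m‖ * ((p : ℝ) ^ (-δ / ((p : ℝ) - 1))) ^ (∑ α, (m α).natAbs) ≤
      K * ‖f.coeff m‖) :
    intervalGaussNorm p s' r' g ≤ K * intervalGaussNorm p s'' r'' f := by
  refine intervalGaussNorm_le p _ _ g fun c => gaussNorm_le p _ g fun m => ?_
  have hp := (Fact.out : p.Prime)
  have hc : ∀ α, s'' α + δ ≤ corner s' r' c α ∧ corner s' r' c α + δ ≤ r'' α := fun α =>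
    ⟨by linarith [(hδ α).1, (corner_mem_Icc hsr c α).1],
      by linarith [(hδ α).2, (corner_mem_Icc hsr c α).2]⟩
  set c'' : Fin n → Bool := fun α => decide (m α < 0)
  set q : ℝ := ((p : ℝ) ^ (-δ / ((p : ℝ) - 1))) ^ (∑ α, (m α).natAbs)
  have hw := (gaussWeight_pos hp.pos (corner s'' r'' c'') m).le
  calc ‖g.coeff m‖ * gaussWeight p (corner s' r' c) m
      ≤ ‖g.coeff m‖ * (q * gaussWeight p (corner s'' r'' c'') m) :=
        mul_le_mul_of_nonneg_left (gaussWeight_le_pow_mul hp.one_lt hc m) (norm_nonneg _)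
    _ = ‖g.coeff m‖ * q * gaussWeight p (corner s'' r'' c'') m := (mul_assoc _ _ _).symm
    _ ≤ K * ‖f.coeff m‖ * gaussWeight p (corner s'' r'' c'') m :=
        mul_le_mul_of_nonneg_right (h m) hw
    _ = K * (‖f.coeff m‖ * gaussWeight p (corner s'' r'' c'') m) := mul_assoc _ _ _
    _ ≤ K * intervalGaussNorm p s'' r'' f :=
        mul_le_mul_of_nonneg_left
          ((le_gaussNorm p _ f m).trans (gaussNorm_le_intervalGaussNorm p _ _ _ f)) hK

theorem intervalGaussNorm_le_of_norm_coeff_le {s'' s' r' r'' : Fin n → ℝ}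
    (hs : ∀ α, s'' α ≤ s' α) (hsr : ∀ α, s' α ≤ r' α) (hr : ∀ α, r' α ≤ r'' α) {f g : 𝓛 p n}
    (h : ∀ m, ‖g.coeff m‖ ≤ ‖f.coeff m‖) :
    intervalGaussNorm p s' r' g ≤ intervalGaussNorm p s'' r'' f := by
  simpa using intervalGaussNorm_le_mul_of_norm_coeff_le (δ := 0) hsr
    (fun α => by simpa using ⟨hs α, hr α⟩) zero_le_one (f := f) (g := g) (by simpa using h)

theorem coeff_laurentTruncate (N : ℕ) (f : 𝓛 p n) (m : Fin n → ℤ) :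
    (laurentTruncate p N f).coeff m = if ∀ α, |m α| ≤ (N : ℤ) then f.coeff m else 0 := by
  classical
  rw [laurentTruncate, AddMonoidAlgebra.coeff_ofCoeff, Finsupp.filter_apply]

theorem intervalGaussNorm_sub_laurentTruncate_le {s'' s' r' r'' : Fin n → ℝ} {δ : ℝ}
    (hsr : ∀ α, s' α ≤ r' α) (hδ0 : 0 ≤ δ) (hδ : ∀ α, s'' α + δ ≤ s' α ∧ r' α + δ ≤ r'' α)
    (N : ℕ) (f : 𝓛 p n) :
    intervalGaussNorm p s' r' (f - laurentTruncate p N f) ≤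
      ((p : ℝ) ^ (-δ / ((p : ℝ) - 1))) ^ (N + 1) * intervalGaussNorm p s'' r'' f := by
  have hp : (1 : ℝ) < p := by exact_mod_cast (Fact.out : p.Prime).one_lt
  have hq0 : 0 ≤ (p : ℝ) ^ (-δ / ((p : ℝ) - 1)) := by positivity
  have hq1 : (p : ℝ) ^ (-δ / ((p : ℝ) - 1)) ≤ 1 :=
    Real.rpow_le_one_of_one_le_of_nonpos hp.le
      (div_nonpos_of_nonpos_of_nonneg (neg_nonpos.2 hδ0) (by linarith))
  refine intervalGaussNorm_le_mul_of_norm_coeff_le hsr hδ (by positivity) fun m => ?_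
  rw [AddMonoidAlgebra.coeff_sub, Finsupp.sub_apply, coeff_laurentTruncate]
  split_ifs with hm
  · simp only [sub_self, norm_zero, zero_mul]
    positivity
  · rw [sub_zero, mul_comm]
    exact mul_le_mul_of_nonneg_right
      (pow_le_pow_of_le_one hq0 hq1 (lt_sum_natAbs_of_not_forall_abs_le hm)) (norm_nonneg _)

theorem exists_intervalGaussNorm_sub_laurentTruncate_le {s'' s' r' r'' : Fin n → ℝ}
    (hs : ∀ α, s'' α < s' α) (hsr : ∀ α, s' α ≤ r' α) (hr : ∀ α, r' α < r'' α) :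
    ∃ q : ℝ, 0 ≤ q ∧ q < 1 ∧ ∀ (N : ℕ) (f : 𝓛 p n),
      intervalGaussNorm p s' r' (f - laurentTruncate p N f) ≤
        q ^ (N + 1) * intervalGaussNorm p s'' r'' f := by
  obtain ⟨δ, hδ0, hδ⟩ := exists_pos_forall_add_le hs hr
  have hp : (1 : ℝ) < p := by exact_mod_cast (Fact.out : p.Prime).one_lt
  exact ⟨_, by positivity, Real.rpow_lt_one_of_one_lt_of_neg hp
    (div_neg_of_neg_of_pos (neg_neg_of_pos hδ0) (by linarith)),
    intervalGaussNorm_sub_laurentTruncate_le hsr hδ0.le hδ⟩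

end GaussNorm

section DenseExtension

variable {𝕜 A E F : Type*} [NontriviallyNormedField 𝕜]

theorem ContinuousLinearMap.opNorm_le_of_denseRange [SeminormedAddCommGroup E] [NormedSpace 𝕜 E]
    [NormedAddCommGroup F] [NormedSpace 𝕜 F] (Φ : E →L[𝕜] F) {e : A → E} (he : DenseRange e)
    {C : ℝ} (hC : 0 ≤ C) (h : ∀ a, ‖Φ (e a)‖ ≤ C * ‖e a‖) : ‖Φ‖ ≤ C :=
  Φ.opNorm_le_bound hC fun x => he.induction_on x (isClosed_le (by fun_prop) (by fun_prop)) h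

theorem AlgHom.existsUnique_continuous_ringHom_comp_eq [Ring A] [Algebra 𝕜 A] [NormedRing E]
    [NormedAlgebra 𝕜 E] [NormedRing F] [NormedAlgebra 𝕜 F] [CompleteSpace F] (e : A →ₐ[𝕜] E)
    (he : DenseRange e) (φ : A →ₐ[𝕜] F) {C : ℝ} (h : ∀ a, ‖φ a‖ ≤ C * ‖e a‖) :
    ∃! Φ : E →+* F, Continuous Φ ∧ ∀ a, Φ (e a) = φ a := by
  set L := φ.toLinearMap.extendOfNorm e.toLinearMap
  have hL : ∀ a, L (e a) = φ a := LinearMap.extendOfNorm_eq he ⟨C, h⟩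
  have hmul : ∀ x y, L (x * y) = L x * L y :=
    he.induction_on₂ (isClosed_eq (by fun_prop) (by fun_prop)) fun a b => by
      rw [← map_mul, hL, hL, hL, map_mul]
  refine ⟨{ L.toLinearMap.toAddMonoidHom with
      map_one' := show L 1 = 1 by rw [← map_one e, hL, map_one]
      map_mul' := hmul }, ⟨L.continuous, hL⟩, ?_⟩
  rintro G ⟨hG, hGe⟩
  exact DFunLike.coe_injective <|
    he.equalizer hG L.continuous (funext fun a => (hGe a).trans (hL a).symm)

end DenseExtension

noncomputable def laurentTruncateLinearMap (p : ℕ) [Fact p.Prime] {n : ℕ} (N : ℕ) :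
    𝓛 p n →ₗ[ℚ_[p]] 𝓛 p n where
  toFun := laurentTruncate p N
  map_add' f g := by
    simp only [laurentTruncate, AddMonoidAlgebra.coeff_add, Finsupp.filter_add,
      AddMonoidAlgebra.ofCoeff_add]
  map_smul' c f := by
    simp only [laurentTruncate, AddMonoidAlgebra.coeff_smul, Finsupp.filter_smul,
      AddMonoidAlgebra.ofCoeff_smul, RingHom.id_apply]

theorem norm_coeff_laurentTruncate_le {p : ℕ} [Fact p.Prime] {n : ℕ} (N : ℕ) (f : 𝓛 p n)
    (m : Fin n → ℤ) : ‖(laurentTruncate p N f).coeff m‖ ≤ ‖f.coeff m‖ := by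
  rw [coeff_laurentTruncate]
  split_ifs <;> simp

theorem GaussCompletion.finiteDimensional_range {p : ℕ} [Fact p.Prime] {n : ℕ}
    {N₁ N₂ : 𝓛 p n → ℝ} (C₁ : GaussCompletion p n N₁) (C₂ : GaussCompletion p n N₂)
    (T : C₁.carrier →L[ℚ_[p]] C₂.carrier) (N : ℕ)
    (hT : ∀ f, T (C₁.emb f) = C₂.emb (laurentTruncate p N f)) :
    FiniteDimensional ℚ_[p] (LinearMap.range T.toLinearMap) := by
  let box : Set (Fin n → ℤ) := {m | ∀ α, |m α| ≤ (N : ℤ)}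
  let W := (AddMonoidAlgebra.supported ℚ_[p] ℚ_[p] box).map C₂.emb.toLinearMap
  have : FiniteDimensional ℚ_[p] (AddMonoidAlgebra.supported ℚ_[p] ℚ_[p] box) := by
    rw [AddMonoidAlgebra.supported_eq_span_single]
    exact FiniteDimensional.span_of_finite _ ((finite_setOf_forall_abs_le N).image _)
  have hmem : ∀ f, laurentTruncate p N f ∈ AddMonoidAlgebra.supported ℚ_[p] ℚ_[p] box :=
    fun f => AddMonoidAlgebra.mem_supported'.2 fun m hm => by
      rw [coeff_laurentTruncate]
      exact if_neg hm
  refine Submodule.finiteDimensional_of_le (S₂ := W) ?_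
  rintro _ ⟨x, rfl⟩
  refine C₁.denseRange.induction_on x (W.closed_of_finiteDimensional.preimage T.continuous)
    fun f => ?_
  show T (C₁.emb f) ∈ W
  rw [hT f]
  exact Submodule.mem_map_of_mem (hmem f)

theorem restriction_map_completely_continuous_general
    (p : ℕ) [Fact p.Prime] (n : ℕ) (s'' s' r' r'' : Fin n → ℝ)
    (h1 : ∀ α, s'' α < s' α) (h2 : ∀ α, s' α ≤ r' α)
    (h3 : ∀ α, r' α < r'' α)
    (C'' : GaussCompletion p n (intervalGaussNorm p s'' r''))
    (C' : GaussCompletion p n (intervalGaussNorm p s' r')) :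
    (∃! F : C''.carrier →+* C'.carrier, Continuous F ∧ ∀ f, F (C''.emb f) = C'.emb f) ∧
    (∀ F : C''.carrier →L[ℚ_[p]] C'.carrier, (∀ f, F (C''.emb f) = C'.emb f) →
      ∃ T : ℕ → (C''.carrier →L[ℚ_[p]] C'.carrier),
        (∀ N : ℕ,
          FiniteDimensional ℚ_[p]
            ↥(LinearMap.range ((T N).toLinearMap)) ∧
          ∀ f, T N (C''.emb f) = C'.emb (laurentTruncate p N f)) ∧
        Filter.Tendsto T Filter.atTop (nhds F)) := by
  have hs : ∀ α, s'' α ≤ s' α := fun α => (h1 α).le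
  have hr : ∀ α, r' α ≤ r'' α := fun α => (h3 α).le
  have hrestrict : ∀ g f : 𝓛 p n, (∀ m, ‖g.coeff m‖ ≤ ‖f.coeff m‖) →
      ‖C'.emb g‖ ≤ 1 * ‖C''.emb f‖ := fun g f h => by
    rw [one_mul, C'.isometric, C''.isometric]
    exact intervalGaussNorm_le_of_norm_coeff_le hs h2 hr h
  refine ⟨C''.emb.existsUnique_continuous_ringHom_comp_eq C''.denseRange C'.emb
    fun f => hrestrict f f fun _ => le_rfl, fun F hF => ?_⟩
  let T N := (C'.emb.toLinearMap ∘ₗ laurentTruncateLinearMap p N).extendOfNorm C''.emb.toLinearMap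
  have hT N f : T N (C''.emb f) = C'.emb (laurentTruncate p N f) :=
    LinearMap.extendOfNorm_eq C''.denseRange
      ⟨1, fun f => hrestrict _ f (norm_coeff_laurentTruncate_le N f)⟩ f
  refine ⟨T, fun N => ⟨C''.finiteDimensional_range C' (T N) N (hT N), hT N⟩, ?_⟩
  obtain ⟨q, hq0, hq1, htail⟩ := exists_intervalGaussNorm_sub_laurentTruncate_le (p := p) h1 h2 h3
  have hdist N : ‖T N - F‖ ≤ q ^ (N + 1) :=
    (T N - F).opNorm_le_of_denseRange C''.denseRange (by positivity) fun f => by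
      rw [sub_apply, hT, hF, norm_sub_rev, ← map_sub, C'.isometric, C''.isometric]
      exact htail N f
  rw [tendsto_iff_norm_sub_tendsto_zero]
  exact squeeze_zero (fun _ => norm_nonneg _) hdist
    ((tendsto_pow_atTop_nhds_zero_of_lt_one hq0 hq1).comp (Filter.tendsto_add_atTop_nat 1))

/-- For `0 < s'' < s' ≤ r' < r''` componentwise, the canonical continuous ring homomorphism
`Π_{[s'',r'']} → Π_{[s',r']}` (the unique continuous extension of the identity on Laurent
polynomials) is completely continuous: it is the operator-norm limit of the finite-rank
truncation operators `Σ aₘTᵐ ↦ Σ_{|m_α|≤N} aₘTᵐ` as `N → ∞`. -/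
theorem restriction_map_completely_continuous
    (p : ℕ) [Fact p.Prime] (n : ℕ) (s'' s' r' r'' : Fin n → ℝ)
    (h0 : ∀ α, 0 < s'' α) (h1 : ∀ α, s'' α < s' α) (h2 : ∀ α, s' α ≤ r' α)
    (h3 : ∀ α, r' α < r'' α)
    (C'' : GaussCompletion p n (intervalGaussNorm p s'' r''))
    (C' : GaussCompletion p n (intervalGaussNorm p s' r')) :
    (∃! F : C''.carrier →+* C'.carrier, Continuous F ∧ ∀ f, F (C''.emb f) = C'.emb f) ∧
    (∀ F : C''.carrier →L[ℚ_[p]] C'.carrier, (∀ f, F (C''.emb f) = C'.emb f) →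
      ∃ T : ℕ → (C''.carrier →L[ℚ_[p]] C'.carrier),
        (∀ N : ℕ,
          FiniteDimensional ℚ_[p]
            ↥(LinearMap.range ((T N).toLinearMap)) ∧
          ∀ f, T N (C''.emb f) = C'.emb (laurentTruncate p N f)) ∧
        Filter.Tendsto T Filter.atTop (nhds F)) :=
  restriction_map_completely_continuous_general p n s'' s' r' r'' h1 h2 h3 C'' C'
end
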